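/- arXiv:2402.17615 — 2 statements merged into one kernel-verified Lean document; each statement's English description precedes it below -/
import Mathlib

section
/- (Consensus for strongly connected graphs) If the influence graph G is strongly connected and every bias function β_{i,j} is continuous and lies in region R, then for every initial belief state B^0 ∈ [0,1]^n there exists v ∈ [0,1] such that every agent's belief converges to v: lim_{t→∞} B^t_i = v for all i. -/
/-!
The largest belief can only decrease and the smallest can only increase, since each update
moves an agent towards its in-neighbours without overshooting; let `M` and `m` be their limits.
By compactness the trajectory has a limit point `L`, and by continuity every iterate of `L` has
largest belief `M` and smallest belief `m`. A bias function satisfies `β d ≤ c` whenever `d ≤ c`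
and `0 ≤ c`, with equality only for `d = c = 0`; hence an agent holding the maximal belief after
one step already held it, and so did all its in-neighbours. The sets of maximisers of the
iterates of `L` thus decrease, stabilise, and are then closed under in-neighbours, so by strong
connectivity some iterate of `L` is constant and `m = M`.
-/

open Filter

/-- A bias function `β : [-1,1] → [-1,1]` is in the receptive-resistant region R. -/
def InRegionR (β : ℝ → ℝ) : Prop :=
  (∀ x ∈ Set.Icc (-1:ℝ) 1, β x ∈ Set.Icc (-1:ℝ) 1) ∧
  (∀ x ∈ Set.Icc (-1:ℝ) 1, x < 0 → x < β x ∧ β x < 0) ∧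
  (∀ x ∈ Set.Icc (-1:ℝ) 1, 0 < x → 0 < β x ∧ β x < x) ∧
  β 0 = 0

open Topology Finset

namespace InRegionR

variable {g : ℝ → ℝ} (hg : InRegionR g) {c d : ℝ}
include hg

theorem apply_le (hd : d ∈ Set.Icc (-1 : ℝ) 1) (hdc : d ≤ c) (hc : 0 ≤ c) : g d ≤ c := by
  rcases lt_trichotomy d 0 with h | rfl | h
  · linarith [(hg.2.1 d hd h).2]
  · rwa [hg.2.2.2]
  · linarith [(hg.2.2.1 d hd h).2]

theorem le_apply (hd : d ∈ Set.Icc (-1 : ℝ) 1) (hcd : c ≤ d) (hc : c ≤ 0) : c ≤ g d := by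
  rcases lt_trichotomy d 0 with h | rfl | h
  · linarith [(hg.2.1 d hd h).1]
  · rwa [hg.2.2.2]
  · linarith [(hg.2.2.1 d hd h).1]

theorem eq_zero_of_apply_eq (hd : d ∈ Set.Icc (-1 : ℝ) 1) (hdc : d ≤ c) (hc : 0 ≤ c)
    (h : g d = c) : d = 0 ∧ c = 0 := by
  rcases lt_trichotomy d 0 with h' | rfl | h'
  · linarith [(hg.2.1 d hd h').2]
  · exact ⟨rfl, by rw [← h, hg.2.2.2]⟩
  · linarith [(hg.2.2.1 d hd h').2]

end InRegionR

section BiasStep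

variable {A : Type*} [Fintype A] (I : A → A → ℝ) (β : A → A → ℝ → ℝ)

noncomputable def inNeighbors (i : A) : Finset A := univ.filter fun j => 0 < I j i

noncomputable def influenceWeight (i j : A) : ℝ := I j i / ∑ k ∈ inNeighbors I i, I k i

noncomputable def biasStep (x : A → ℝ) (i : A) : ℝ :=
  x i + ∑ j ∈ inNeighbors I i, influenceWeight I i j * β i j (x j - x i)

variable {I} {i j : A}

theorem sum_inNeighbors_pos (hne : (inNeighbors I i).Nonempty) :
    0 < ∑ k ∈ inNeighbors I i, I k i :=
  sum_pos (fun _ hk => (mem_filter.1 hk).2) hne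

theorem influenceWeight_pos (hj : j ∈ inNeighbors I i) : 0 < influenceWeight I i j :=
  div_pos (mem_filter.1 hj).2 (sum_inNeighbors_pos ⟨j, hj⟩)

theorem sum_influenceWeight (hne : (inNeighbors I i).Nonempty) :
    ∑ j ∈ inNeighbors I i, influenceWeight I i j = 1 := by
  simp_rw [influenceWeight, ← sum_div]
  exact div_self (sum_inNeighbors_pos hne).ne'

theorem sum_influenceWeight_le_one : ∑ j ∈ inNeighbors I i, influenceWeight I i j ≤ 1 := by
  rcases (inNeighbors I i).eq_empty_or_nonempty with hne | hne
  · simp [hne]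
  · exact (sum_influenceWeight hne).le

variable {β} (hβR : ∀ i j, 0 < I j i → InRegionR (β i j)) {x : A → ℝ} {a b : ℝ}
  (hx : ∀ k, x k ∈ Set.Icc a b) (hab : b - a ≤ 1)
include hβR hx hab

omit [Fintype A] hβR in
theorem sub_mem_Icc_of_mem_Icc (i j : A) : x j - x i ∈ Set.Icc (-1 : ℝ) 1 :=
  ⟨by linarith [(hx j).1, (hx i).2], by linarith [(hx j).2, (hx i).1]⟩

theorem biasStep_mem_Icc (i : A) : biasStep I β x i ∈ Set.Icc a b := by
  have hW1 : ∑ j ∈ inNeighbors I i, influenceWeight I i j ≤ 1 := sum_influenceWeight_le_one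
  have hβ (j) (hj : j ∈ inNeighbors I i) := hβR i j (mem_filter.1 hj).2
  have hlow : (∑ j ∈ inNeighbors I i, influenceWeight I i j) * (a - x i) ≤
      ∑ j ∈ inNeighbors I i, influenceWeight I i j * β i j (x j - x i) := by
    rw [sum_mul]
    refine sum_le_sum fun j hj => mul_le_mul_of_nonneg_left ?_ (influenceWeight_pos hj).le
    exact (hβ j hj).le_apply (sub_mem_Icc_of_mem_Icc hx hab i j)
      (by linarith [(hx j).1]) (by linarith [(hx i).1])
  have hup : ∑ j ∈ inNeighbors I i, influenceWeight I i j * β i j (x j - x i) ≤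
      (∑ j ∈ inNeighbors I i, influenceWeight I i j) * (b - x i) := by
    rw [sum_mul]
    refine sum_le_sum fun j hj => mul_le_mul_of_nonneg_left ?_ (influenceWeight_pos hj).le
    exact (hβ j hj).apply_le (sub_mem_Icc_of_mem_Icc hx hab i j)
      (by linarith [(hx j).2]) (by linarith [(hx i).2])
  constructor <;> simp only [biasStep]
  · nlinarith [mul_nonneg (sub_nonneg.2 hW1) (sub_nonneg.2 (hx i).1)]
  · nlinarith [mul_nonneg (sub_nonneg.2 hW1) (sub_nonneg.2 (hx i).2)]

theorem eq_of_biasStep_eq (h : biasStep I β x i = b) :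
    x i = b ∧ ∀ j ∈ inNeighbors I i, x j = b := by
  rcases (inNeighbors I i).eq_empty_or_nonempty with hne | hne
  · simp only [biasStep, hne, sum_empty, add_zero] at h
    simp [h, hne]
  have hle : ∀ j ∈ inNeighbors I i, influenceWeight I i j * β i j (x j - x i) ≤
      influenceWeight I i j * (b - x i) := fun j hj =>
    mul_le_mul_of_nonneg_left ((hβR i j (mem_filter.1 hj).2).apply_le
      (sub_mem_Icc_of_mem_Icc hx hab i j) (by linarith [(hx j).2]) (by linarith [(hx i).2]))
      (influenceWeight_pos hj).le
  have hsum : ∑ j ∈ inNeighbors I i, influenceWeight I i j * β i j (x j - x i) =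
      ∑ j ∈ inNeighbors I i, influenceWeight I i j * (b - x i) := by
    rw [← sum_mul, sum_influenceWeight hne, one_mul]
    simp only [biasStep] at h
    linarith
  have hzero : ∀ j ∈ inNeighbors I i, x j - x i = 0 ∧ b - x i = 0 := fun j hj =>
    (hβR i j (mem_filter.1 hj).2).eq_zero_of_apply_eq (sub_mem_Icc_of_mem_Icc hx hab i j)
      (by linarith [(hx j).2]) (by linarith [(hx i).2])
      (mul_left_cancel₀ (influenceWeight_pos hj).ne' ((sum_eq_sum_iff_of_le hle).1 hsum j hj))
  obtain ⟨j₀, hj₀⟩ := hne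
  exact ⟨by linarith [hzero j₀ hj₀], fun j hj => by linarith [hzero j hj]⟩

end BiasStep

section Dynamics

variable {A : Type*} [Fintype A] {I : A → A → ℝ} {β : A → A → ℝ → ℝ}

theorem continuousOn_biasStep
    (hβcont : ∀ i j, 0 < I j i → ContinuousOn (β i j) (Set.Icc (-1 : ℝ) 1)) :
    ContinuousOn (biasStep I β) (Set.univ.pi fun _ => Set.Icc 0 1) := by
  refine continuousOn_pi.2 fun i => (continuous_apply i).continuousOn.add ?_
  refine continuousOn_finsetSum _ fun j hj => continuousOn_const.mul ?_
  refine (hβcont i j (mem_filter.1 hj).2).comp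
    ((continuous_apply j).sub (continuous_apply i)).continuousOn fun x hx => ?_
  exact sub_mem_Icc_of_mem_Icc (Set.mem_univ_pi.1 hx) (by norm_num) i j

variable (hβR : ∀ i j, 0 < I j i → InRegionR (β i j))
include hβR

theorem mapsTo_biasStep :
    Set.MapsTo (biasStep I β) (Set.univ.pi fun _ => Set.Icc 0 1)
      (Set.univ.pi fun _ => Set.Icc 0 1) :=
  fun _ hx => Set.mem_univ_pi.2 (biasStep_mem_Icc hβR (Set.mem_univ_pi.1 hx) (by norm_num))

theorem biasStep_mem_Icc_inf'_sup' [Nonempty A] {x : A → ℝ}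
    (hx : x ∈ Set.univ.pi fun _ => Set.Icc 0 1) (i : A) :
    biasStep I β x i ∈ Set.Icc (univ.inf' univ_nonempty x) (univ.sup' univ_nonempty x) := by
  refine biasStep_mem_Icc hβR (fun j => ⟨inf'_le _ (mem_univ j), le_sup' _ (mem_univ j)⟩) ?_ i
  linarith [sup'_le univ_nonempty x fun j _ => (hx j trivial).2,
    le_inf' univ_nonempty x fun j _ => (hx j trivial).1]

variable [Nonempty A] {B : ℕ → A → ℝ} (hB : ∀ t, B (t + 1) = biasStep I β (B t))
  (hBK : ∀ t, B t ∈ Set.univ.pi fun _ => Set.Icc 0 1)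
include hB hBK

theorem antitone_sup'_of_biasStep : Antitone fun t => univ.sup' univ_nonempty (B t) :=
  antitone_nat_of_succ_le fun t =>
    sup'_le _ _ fun i _ => hB t ▸ (biasStep_mem_Icc_inf'_sup' hβR (hBK t) i).2

theorem monotone_inf'_of_biasStep : Monotone fun t => univ.inf' univ_nonempty (B t) :=
  monotone_nat_of_le_succ fun t =>
    le_inf' _ _ fun i _ => hB t ▸ (biasStep_mem_Icc_inf'_sup' hβR (hBK t) i).1

end Dynamics

theorem tendsto_add_iterate_of_tendsto_subseq {X : Type*} [TopologicalSpace X] {F : X → X}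
    {K : Set X} (hF : ContinuousOn F K) (hFK : Set.MapsTo F K K) {x : ℕ → X}
    (hx : ∀ t, x (t + 1) = F (x t)) (hxK : ∀ t, x t ∈ K) {φ : ℕ → ℕ} {L : X} (hL : L ∈ K)
    (hφ : Tendsto (x ∘ φ) atTop (𝓝 L)) (s : ℕ) :
    Tendsto (fun k => x (φ k + s)) atTop (𝓝 (F^[s] L)) := by
  induction s with
  | zero => exact hφ
  | succ s ih =>
    rw [Function.iterate_succ_apply']
    simp only [← add_assoc, hx]
    exact (hF _ (hFK.iterate s hL)).tendsto.comp
      (tendsto_nhdsWithin_iff.2 ⟨ih, Eventually.of_forall fun _ => hxK _⟩)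

theorem eq_of_tendsto_comp_of_tendsto_subseq {X Y : Type*} [TopologicalSpace X]
    [TopologicalSpace Y] [T2Space Y] {f : X → Y} (hf : Continuous f) {x : ℕ → X} {c : Y}
    (hfx : Tendsto (f ∘ x) atTop (𝓝 c)) {ψ : ℕ → ℕ} (hψ : Tendsto ψ atTop atTop) {y : X}
    (hy : Tendsto (x ∘ ψ) atTop (𝓝 y)) : f y = c :=
  tendsto_nhds_unique ((hf.tendsto y).comp hy) (hfx.comp hψ)

theorem exists_eq_univ_of_antitone_of_pred {α : Type*} [Finite α] {r : α → α → Prop}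
    (hr : ∀ a b, Relation.ReflTransGen r a b) {S : ℕ → Set α} (hS : Antitone S)
    (hne : ∀ s, (S s).Nonempty) (hpred : ∀ s a b, r a b → b ∈ S (s + 1) → a ∈ S s) :
    ∃ s, S s = Set.univ := by
  obtain ⟨s, hs⟩ := WellFoundedLT.antitone_chain_condition hS
  obtain ⟨b, hb⟩ := hne s
  refine ⟨s, Set.eq_univ_of_forall fun a => ?_⟩
  induction hr a b using Relation.ReflTransGen.head_induction_on with
  | refl => exact hb
  | head hac _ ih => exact hpred s _ _ hac (hs (s + 1) s.le_succ ▸ ih)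

theorem exists_iterate_biasStep_eq_const {A : Type*} [Fintype A] [Nonempty A] {I : A → A → ℝ}
    {β : A → A → ℝ → ℝ} (hconn : ∀ i j : A, Relation.ReflTransGen (fun a b => 0 < I a b) i j)
    (hβR : ∀ i j, 0 < I j i → InRegionR (β i j)) {L : A → ℝ}
    (hL : L ∈ Set.univ.pi fun _ => Set.Icc 0 1) {c : ℝ}
    (hsup : ∀ s, univ.sup' univ_nonempty ((biasStep I β)^[s] L) = c) :
    ∃ s, (biasStep I β)^[s] L = fun _ => c := by
  have hmem (s k) : (biasStep I β)^[s] L k ∈ Set.Icc 0 c :=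
    ⟨((mapsTo_biasStep hβR).iterate s hL k trivial).1, hsup s ▸ le_sup' _ (mem_univ k)⟩
  have hc : c ≤ 1 := hsup 0 ▸ sup'_le _ _ fun k _ => (hL k trivial).2
  have hsucc (s i) (hi : (biasStep I β)^[s + 1] L i = c) :
      (biasStep I β)^[s] L i = c ∧ ∀ j ∈ inNeighbors I i, (biasStep I β)^[s] L j = c := by
    rw [Function.iterate_succ_apply'] at hi
    exact eq_of_biasStep_eq hβR (hmem s) (by linarith) hi
  have hne (s) : {i | (biasStep I β)^[s] L i = c}.Nonempty := by
    obtain ⟨i, -, hi⟩ := exists_mem_eq_sup' univ_nonempty ((biasStep I β)^[s] L)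
    exact ⟨i, (hsup s ▸ hi).symm⟩
  obtain ⟨s, hs⟩ := exists_eq_univ_of_antitone_of_pred hconn
    (antitone_nat_of_succ_le fun s i hi => (hsucc s i hi).1) hne
    fun s j i hji hi => (hsucc s i hi).2 j (mem_filter.2 ⟨mem_univ j, hji⟩)
  exact ⟨s, funext fun i => Set.eq_univ_iff_forall.1 hs i⟩

theorem stmt_8_general {A : Type*} [Fintype A] [Nonempty A]
    (I : A → A → ℝ)
    -- strong connectivity: a directed path between any two agents
    (hconn : ∀ i j : A, Relation.ReflTransGen (fun a b => 0 < I a b) i j)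
    (β : A → A → ℝ → ℝ)
    (hβR : ∀ i j, 0 < I j i → InRegionR (β i j))
    (hβcont : ∀ i j, 0 < I j i → ContinuousOn (β i j) (Set.Icc (-1:ℝ) 1))
    (B : ℕ → A → ℝ) (hB0 : ∀ k, B 0 k ∈ Set.Icc (0:ℝ) 1)
    (hupd : ∀ t i, B (t+1) i = B t i +
      ∑ j ∈ Finset.univ.filter (fun j => 0 < I j i),
        (I j i / ∑ k ∈ Finset.univ.filter (fun k => 0 < I k i), I k i) *
          β i j (B t j - B t i)) :
    ∃ v ∈ Set.Icc (0:ℝ) 1, ∀ i, Tendsto (fun t => B t i) atTop (nhds v) := by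
  have hB (t) : B (t + 1) = biasStep I β (B t) := funext (hupd t)
  have hBK (t) : B t ∈ Set.univ.pi fun _ => Set.Icc 0 1 := by
    induction t with
    | zero => exact Set.mem_univ_pi.2 hB0
    | succ t ih => exact hB t ▸ mapsTo_biasStep hβR ih
  obtain ⟨i₀⟩ := ‹Nonempty A›
  have hMlim := tendsto_atTop_ciInf (antitone_sup'_of_biasStep hβR hB hBK)
    ⟨0, Set.forall_mem_range.2 fun t => le_sup'_of_le _ (mem_univ i₀) (hBK t i₀ trivial).1⟩
  have hmlim := tendsto_atTop_ciSup (monotone_inf'_of_biasStep hβR hB hBK)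
    ⟨1, Set.forall_mem_range.2 fun t => inf'_le_of_le _ (mem_univ i₀) (hBK t i₀ trivial).2⟩
  obtain ⟨L, hL, φ, hφ, hBL⟩ := (isCompact_univ_pi fun _ => isCompact_Icc).tendsto_subseq hBK
  have hBLs := tendsto_add_iterate_of_tendsto_subseq (continuousOn_biasStep hβcont)
    (mapsTo_biasStep hβR) hB hBK hL hBL
  have hφs (s) : Tendsto (φ · + s) atTop atTop := (tendsto_add_atTop_nat s).comp hφ.tendsto_atTop
  have hsup' : Continuous fun x : A → ℝ => univ.sup' univ_nonempty x :=
    Continuous.finset_sup'_apply _ fun i _ => continuous_apply i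
  have hinf' : Continuous fun x : A → ℝ => univ.inf' univ_nonempty x :=
    Continuous.finset_inf'_apply _ fun i _ => continuous_apply i
  obtain ⟨s, hs⟩ := exists_iterate_biasStep_eq_const hconn hβR hL fun s =>
    eq_of_tendsto_comp_of_tendsto_subseq hsup' hMlim (hφs s) (hBLs s)
  have hmM := eq_of_tendsto_comp_of_tendsto_subseq hinf' hmlim (hφs s) (hBLs s)
  rw [hs, inf'_const] at hmM
  refine ⟨_, congrFun hs i₀ ▸ (mapsTo_biasStep hβR).iterate s hL i₀ trivial, fun i => ?_⟩
  exact tendsto_of_tendsto_of_tendsto_of_le_of_le (hmM ▸ hmlim) hMlim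
    (fun t => inf'_le _ (mem_univ i)) (fun t => le_sup' _ (mem_univ i))

theorem stmt_8 {A : Type*} [Fintype A] [Nonempty A] [DecidableEq A]
    (I : A → A → ℝ) (hI : ∀ j i, 0 ≤ I j i)
    -- strong connectivity: a directed path between any two agents
    (hconn : ∀ i j : A, Relation.ReflTransGen (fun a b => 0 < I a b) i j)
    (β : A → A → ℝ → ℝ)
    (hβR : ∀ i j, 0 < I j i → InRegionR (β i j))
    (hβcont : ∀ i j, 0 < I j i → ContinuousOn (β i j) (Set.Icc (-1:ℝ) 1))
    (B : ℕ → A → ℝ) (hB0 : ∀ k, B 0 k ∈ Set.Icc (0:ℝ) 1)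
    (hupd : ∀ t i, B (t+1) i = B t i +
      ∑ j ∈ Finset.univ.filter (fun j => 0 < I j i),
        (I j i / ∑ k ∈ Finset.univ.filter (fun k => 0 < I k i), I k i) *
          β i j (B t j - B t i)) :
    ∃ v ∈ Set.Icc (0:ℝ) 1, ∀ i, Tendsto (fun t => B t i) atTop (nhds v) :=
  stmt_8_general I hconn β hβR hβcont B hB0 hupd
end

section
/- (Consensus characterization for arbitrary graphs) Suppose every bias function is continuous and in region R. Then the whole set of agents converges to a common opinion iff there exists v ∈ [0,1] such that every source component of the influence graph converges to opinion v. -/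
open Filter

/-- `S` is a source component of the directed graph with edge relation `E`:
a strongly connected component with no incoming edge from outside. -/
def IsSourceComponent {A : Type*} (E : A → A → Prop) (S : Set A) : Prop :=
  (∃ i, S = {j | Relation.ReflTransGen E i j ∧ Relation.ReflTransGen E j i}) ∧
  (∀ a b, a ∉ S → b ∈ S → ¬ E a b)

/-! The maximal opinion never increases, so it converges to some `L`. An agent attaining the
maximum infinitely often comes arbitrarily close to `L` infinitely often, and this spreads
backwards along edges: an in-neighbour staying `ε` below `L` would, by continuity of the bias on
`[-1, -ε/2]`, push the agent a fixed amount below `L` at every later step. Following edges back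
to a source component, whose opinions tend to `v`, gives `L = v`. The same argument for the
reflected opinions `1 - B` shows that the minimal opinion tends to `v` too. -/

open Finset Set Topology

lemma sub_mem_Icc_neg_one_one {x y : ℝ} (hx : x ∈ Icc (0 : ℝ) 1) (hy : y ∈ Icc (0 : ℝ) 1) :
    y - x ∈ Icc (-1 : ℝ) 1 :=
  ⟨by linarith [hx.2, hy.1], by linarith [hx.1, hy.2]⟩

namespace InRegionR

variable {β : ℝ → ℝ}

lemma apply_le_max (hβ : InRegionR β) {x : ℝ} (hx : x ∈ Icc (-1 : ℝ) 1) : β x ≤ max x 0 := by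
  rcases lt_trichotomy x 0 with hneg | rfl | hpos
  · exact (hβ.2.1 x hx hneg).2.le.trans (le_max_right _ _)
  · simp [hβ.2.2.2]
  · exact (hβ.2.2.1 x hx hpos).2.le.trans (le_max_left _ _)

lemma neg_comp_neg (hβ : InRegionR β) : InRegionR (fun x => -β (-x)) := by
  obtain ⟨hmaps, hneg, hpos, hzero⟩ := hβ
  have hmem : ∀ x ∈ Icc (-1 : ℝ) 1, -x ∈ Icc (-1 : ℝ) 1 := fun x hx =>
    ⟨by linarith [hx.2], by linarith [hx.1]⟩
  refine ⟨fun x hx => ?_, fun x hx hx0 => ?_, fun x hx hx0 => ?_, by simp [hzero]⟩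
  · have := hmaps (-x) (hmem x hx)
    exact ⟨by linarith [this.2], by linarith [this.1]⟩
  · have := hpos (-x) (hmem x hx) (by linarith)
    exact ⟨by linarith, by linarith⟩
  · have := hneg (-x) (hmem x hx) (by linarith)
    exact ⟨by linarith, by linarith⟩

lemma exists_pos_le_neg (hβ : InRegionR β) (hc : ContinuousOn β (Icc (-1 : ℝ) 1)) {δ : ℝ}
    (hδ : 0 < δ) : ∃ c > 0, ∀ x ∈ Icc (-1 : ℝ) (-δ), β x ≤ -c := by
  have hsub : Icc (-1 : ℝ) (-δ) ⊆ Icc (-1 : ℝ) 1 := Icc_subset_Icc le_rfl (by linarith)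
  obtain ⟨c, hc0, hcle⟩ := isCompact_Icc.exists_forall_le' (hc.mono hsub).neg
    fun x hx => neg_pos.2 (hβ.2.1 x (hsub hx) (by linarith [hx.2])).2
  exact ⟨c, hc0, fun x hx => le_neg.2 (hcle x hx)⟩

lemma exists_add_le_max (hβ : InRegionR β) (hc : ContinuousOn β (Icc (-1 : ℝ) 1)) {δ : ℝ}
    (hδ : 0 < δ) : ∃ c > 0, ∀ x ∈ Icc (0 : ℝ) 1, ∀ y ∈ Icc (0 : ℝ) 1,
      x + β (y - x) ≤ max (y + δ) (x - c) := by
  obtain ⟨c, hc0, hcle⟩ := hβ.exists_pos_le_neg hc hδ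
  refine ⟨c, hc0, fun x hx y hy => ?_⟩
  by_cases hyx : y - x ≤ -δ
  · have := hcle (y - x) ⟨(sub_mem_Icc_neg_one_one hx hy).1, hyx⟩
    exact le_max_of_le_right (by linarith)
  · have hle := hβ.apply_le_max (sub_mem_Icc_neg_one_one hx hy)
    have hlt := max_lt (by linarith : y - x < y - x + δ) (by linarith : (0 : ℝ) < y - x + δ)
    exact le_max_of_le_left (by linarith)

end InRegionR

lemma continuousOn_neg_comp_neg_Icc {f : ℝ → ℝ} (hf : ContinuousOn f (Icc (-1 : ℝ) 1)) :
    ContinuousOn (fun x => -f (-x)) (Icc (-1 : ℝ) 1) :=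
  (hf.comp continuous_neg.continuousOn fun x hx => ⟨by linarith [hx.2], by linarith [hx.1]⟩).neg

lemma exists_isSourceComponent_reflTransGen {A : Type*} [Finite A] (E : A → A → Prop) (i : A) :
    ∃ S a, IsSourceComponent E S ∧ a ∈ S ∧ Relation.ReflTransGen E a i := by
  let ancestors : A → Set A := fun x => {y | Relation.ReflTransGen E y x}
  obtain ⟨a, hai, hmin⟩ := Set.exists_min_image (ancestors i) (fun a => (ancestors a).ncard)
    (Set.toFinite _) ⟨i, .refl⟩
  refine ⟨{j | Relation.ReflTransGen E a j ∧ Relation.ReflTransGen E j a}, a,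
    ⟨⟨a, rfl⟩, fun b c hb hc hbc => ?_⟩, ⟨.refl, .refl⟩, hai⟩
  have hba : Relation.ReflTransGen E b a := .head hbc hc.2
  -- `b` is a strict ancestor of `a`, so it has strictly fewer ancestors, against minimality
  have hlt : ancestors b ⊂ ancestors a :=
    ⟨fun y hy => hy.trans hba,
      fun hsub => hb ⟨hsub (Relation.ReflTransGen.refl : a ∈ ancestors a), hba⟩⟩
  exact (Set.ncard_lt_ncard hlt).not_ge (hmin b (hba.trans hai))

section Sums

variable {ι : Type*} {s : Finset ι} {w f : ι → ℝ} {b : ℝ}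

lemma sum_mul_le_of_le (hw : ∀ j ∈ s, 0 ≤ w j) (hw1 : ∑ j ∈ s, w j ≤ 1) (hb : 0 ≤ b)
    (hf : ∀ j ∈ s, f j ≤ b) : ∑ j ∈ s, w j * f j ≤ b :=
  calc ∑ j ∈ s, w j * f j ≤ ∑ j ∈ s, w j * b :=
        sum_le_sum fun j hj => mul_le_mul_of_nonneg_left (hf j hj) (hw j hj)
    _ = (∑ j ∈ s, w j) * b := (sum_mul ..).symm
    _ ≤ b := mul_le_of_le_one_left hb hw1

lemma sum_mul_le_of_le_of_mem (hw : ∀ j ∈ s, 0 ≤ w j) (hw1 : ∑ j ∈ s, w j ≤ 1) (hb : 0 ≤ b)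
    (hf : ∀ j ∈ s, f j ≤ b) {j₀ : ι} (hj₀ : j₀ ∈ s) :
    ∑ j ∈ s, w j * f j ≤ (1 - w j₀) * b + w j₀ * f j₀ := by
  classical
  have hrest : ∑ j ∈ s.erase j₀, w j * f j ≤ (∑ j ∈ s.erase j₀, w j) * b := by
    rw [sum_mul]
    exact sum_le_sum fun j hj =>
      mul_le_mul_of_nonneg_left (hf j (mem_of_mem_erase hj)) (hw j (mem_of_mem_erase hj))
  rw [← add_sum_erase s _ hj₀] at hw1 ⊢
  linarith [mul_le_mul_of_nonneg_right (le_sub_iff_add_le'.2 hw1) hb]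

end Sums

section Dynamics

variable {A : Type*} [Fintype A]

noncomputable def inNbrs (I : A → A → ℝ) (i : A) : Finset A := univ.filter fun j => 0 < I j i

/-- Vanishes identically when `i` has no in-neighbours (division by `0`). -/
noncomputable def weight (I : A → A → ℝ) (i j : A) : ℝ := I j i / ∑ k ∈ inNbrs I i, I k i

lemma weight_nonneg {I : A → A → ℝ} (hI : ∀ j i, 0 ≤ I j i) (i j : A) : 0 ≤ weight I i j :=
  div_nonneg (hI j i) (sum_nonneg fun k _ => hI k i)

lemma weight_pos {I : A → A → ℝ} (hI : ∀ j i, 0 ≤ I j i) {i j : A} (hji : 0 < I j i) :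
    0 < weight I i j :=
  div_pos hji (sum_pos' (fun k _ => hI k i) ⟨j, by simp [inNbrs, hji], hji⟩)

lemma sum_weight_le_one (I : A → A → ℝ) (i : A) : ∑ j ∈ inNbrs I i, weight I i j ≤ 1 := by
  unfold weight
  rw [← sum_div]
  exact div_self_le_one _

structure IsBiasDynamics (I : A → A → ℝ) (β : A → A → ℝ → ℝ) (B : ℕ → A → ℝ) : Prop where
  nonneg : ∀ j i, 0 ≤ I j i
  inRegionR : ∀ i j, 0 < I j i → InRegionR (β i j)
  mem_Icc_zero : ∀ k, B 0 k ∈ Icc (0 : ℝ) 1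
  update : ∀ t i, B (t + 1) i = B t i + ∑ j ∈ inNbrs I i, weight I i j * β i j (B t j - B t i)

noncomputable def maxOpinion [Nonempty A] (B : ℕ → A → ℝ) (t : ℕ) : ℝ :=
  univ.sup' univ_nonempty (B t)

lemma le_maxOpinion [Nonempty A] (B : ℕ → A → ℝ) (t : ℕ) (k : A) : B t k ≤ maxOpinion B t :=
  le_sup' (B t) (mem_univ k)

namespace IsBiasDynamics

variable {I : A → A → ℝ} {β : A → A → ℝ → ℝ} {B : ℕ → A → ℝ}

lemma bias_le (h : IsBiasDynamics I β B) {t : ℕ} (hB : ∀ k, B t k ∈ Icc (0 : ℝ) 1) {U : ℝ}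
    (hU : ∀ k, B t k ≤ U) {i k : A} (hki : 0 < I k i) : β i k (B t k - B t i) ≤ U - B t i :=
  ((h.inRegionR i k hki).apply_le_max (sub_mem_Icc_neg_one_one (hB i) (hB k))).trans
    (max_le (by linarith [hU k]) (sub_nonneg.2 (hU i)))

lemma update_le (h : IsBiasDynamics I β B) {t : ℕ} (hB : ∀ k, B t k ∈ Icc (0 : ℝ) 1) {U : ℝ}
    (hU : ∀ k, B t k ≤ U) (i : A) : B (t + 1) i ≤ U := by
  have hsum : ∑ j ∈ inNbrs I i, weight I i j * β i j (B t j - B t i) ≤ U - B t i :=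
    sum_mul_le_of_le (fun j _ => weight_nonneg h.nonneg i j) (sum_weight_le_one I i)
      (sub_nonneg.2 (hU i)) fun j hj => h.bias_le hB hU (mem_filter.1 hj).2
  rw [h.update]
  linarith

lemma update_le_of_edge (h : IsBiasDynamics I β B) {t : ℕ} (hB : ∀ k, B t k ∈ Icc (0 : ℝ) 1)
    {U : ℝ} (hU : ∀ k, B t k ≤ U) {i j : A} (hji : 0 < I j i) :
    B (t + 1) i ≤ (1 - weight I i j) * U + weight I i j * (B t i + β i j (B t j - B t i)) := by
  have hsum : ∑ k ∈ inNbrs I i, weight I i k * β i k (B t k - B t i) ≤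
      (1 - weight I i j) * (U - B t i) + weight I i j * β i j (B t j - B t i) :=
    sum_mul_le_of_le_of_mem (fun k _ => weight_nonneg h.nonneg i k) (sum_weight_le_one I i)
      (sub_nonneg.2 (hU i)) (fun k hk => h.bias_le hB hU (mem_filter.1 hk).2)
      (by simp [inNbrs, hji])
  rw [h.update]
  linarith

lemma reflect (h : IsBiasDynamics I β B) :
    IsBiasDynamics I (fun i j x => -β i j (-x)) (fun t k => 1 - B t k) where
  nonneg := h.nonneg
  inRegionR i j hji := (h.inRegionR i j hji).neg_comp_neg
  mem_Icc_zero k := ⟨by linarith [(h.mem_Icc_zero k).2], by linarith [(h.mem_Icc_zero k).1]⟩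
  update t i := by
    simp only [h.update t i, sub_sub_sub_cancel_left, neg_sub, mul_neg, sum_neg_distrib]
    ring

lemma mem_Icc (h : IsBiasDynamics I β B) (t : ℕ) (k : A) : B t k ∈ Icc (0 : ℝ) 1 := by
  induction t generalizing k with
  | zero => exact h.mem_Icc_zero k
  | succ t ih =>
    have hle := h.reflect.update_le (t := t) (U := 1)
      (fun k => ⟨by linarith [(ih k).2], by linarith [(ih k).1]⟩)
      (fun k => by linarith [(ih k).1]) k
    exact ⟨by linarith, h.update_le ih (fun k => (ih k).2) k⟩

lemma antitone_maxOpinion [Nonempty A] (h : IsBiasDynamics I β B) : Antitone (maxOpinion B) :=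
  antitone_nat_of_succ_le fun t =>
    sup'_le _ _ fun i _ => h.update_le (h.mem_Icc t) (le_maxOpinion B t) i

lemma eventually_le_of_edge [Nonempty A] (h : IsBiasDynamics I β B) {i j : A} (hji : 0 < I j i)
    (hcont : ContinuousOn (β i j) (Icc (-1 : ℝ) 1)) {L : ℝ}
    (hL : Tendsto (maxOpinion B) atTop (𝓝 L)) {ε : ℝ} (hε : 0 < ε)
    (hj : ∀ᶠ t in atTop, B t j ≤ L - ε) : ∃ η > 0, ∀ᶠ t in atTop, B t i ≤ L - η := by
  obtain ⟨c, hc, hpull⟩ := (h.inRegionR i j hji).exists_add_le_max hcont (half_pos hε)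
  set w := weight I i j
  set m := min (ε / 2) c
  have hw : 0 < w := weight_pos h.nonneg hji
  have hm : 0 < m := lt_min (half_pos hε) hc
  refine ⟨w * m / 2, by positivity, ?_⟩
  have hmax : ∀ᶠ t in atTop, maxOpinion B t < L + w * m / 2 :=
    hL.eventually (gt_mem_nhds (by linarith [mul_pos hw hm]))
  have hnext : ∀ᶠ t in atTop, B (t + 1) i ≤ L - w * m / 2 := by
    filter_upwards [hmax, hj] with t hmaxt hjt
    have hU : ∀ k, B t k ≤ L + w * m / 2 := fun k => (le_maxOpinion B t k).trans hmaxt.le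
    have hpullt : B t i + β i j (B t j - B t i) ≤ L + w * m / 2 - m :=
      (hpull _ (h.mem_Icc t i) _ (h.mem_Icc t j)).trans <| max_le
        (by linarith [min_le_left (ε / 2) c, mul_pos hw hm])
        (by linarith [hU i, min_le_right (ε / 2) c])
    calc B (t + 1) i
        ≤ (1 - w) * (L + w * m / 2) + w * (B t i + β i j (B t j - B t i)) :=
          h.update_le_of_edge (h.mem_Icc t) hU hji
      _ ≤ (1 - w) * (L + w * m / 2) + w * (L + w * m / 2 - m) := by gcongr
      _ = L - w * m / 2 := by ring
  rw [← map_add_atTop_eq_nat 1]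
  exact eventually_map.2 hnext

lemma tendsto_maxOpinion [Nonempty A] (h : IsBiasDynamics I β B)
    (hcont : ∀ i j, 0 < I j i → ContinuousOn (β i j) (Icc (-1 : ℝ) 1)) {v : ℝ}
    (hv : ∀ S : Set A, IsSourceComponent (fun a b => 0 < I a b) S →
      ∀ i ∈ S, Tendsto (fun t => B t i) atTop (𝓝 v)) :
    Tendsto (maxOpinion B) atTop (𝓝 v) := by
  have hbdd : BddBelow (range (maxOpinion B)) :=
    ⟨0, by
      rintro _ ⟨t, rfl⟩
      exact (h.mem_Icc t (Classical.arbitrary A)).1.trans (le_maxOpinion B t _)⟩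
  set L := ⨅ t, maxOpinion B t
  have hL : Tendsto (maxOpinion B) atTop (𝓝 L) := tendsto_atTop_ciInf h.antitone_maxOpinion hbdd
  -- agents whose opinion comes arbitrarily close to `L` infinitely often
  let near : A → Prop := fun k => ¬ ∃ ε > 0, ∀ᶠ t in atTop, B t k ≤ L - ε
  obtain ⟨iₘ, hiₘ⟩ : ∃ i, ∃ᶠ t in atTop, B t i = maxOpinion B t :=
    frequently_exists.1 <| Frequently.of_forall fun t =>
      (exists_mem_eq_sup' univ_nonempty (B t)).imp fun i hi => hi.2.symm
  have hnearₘ : near iₘ := fun ⟨ε, hε, hev⟩ =>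
    (hiₘ.and_eventually hev).exists.elim fun t ⟨heq, hle⟩ =>
      by linarith [ciInf_le hbdd t]
  have hnear : ∀ a, Relation.ReflTransGen (fun a b => 0 < I a b) a iₘ → near a := by
    intro a ha
    induction ha using Relation.ReflTransGen.head_induction_on with
    | refl => exact hnearₘ
    | head hab _ ih =>
      exact fun ⟨ε, hε, hev⟩ => ih (h.eventually_le_of_edge hab (hcont _ _ hab) hL hε hev)
  obtain ⟨S, a, hS, haS, haₘ⟩ := exists_isSourceComponent_reflTransGen (fun a b => 0 < I a b) iₘ
  have ha : Tendsto (fun t => B t a) atTop (𝓝 v) := hv S hS a haS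
  have hLv : L ≤ v := by
    by_contra! hvL
    exact hnear a haₘ ⟨(L - v) / 2, by linarith,
      ha.eventually (ge_mem_nhds (by linarith))⟩
  have hvL : v ≤ L := le_of_tendsto_of_tendsto' ha hL (le_maxOpinion B · a)
  rwa [le_antisymm hLv hvL] at hL

end IsBiasDynamics

end Dynamics

theorem stmt_9_general {A : Type*} [Fintype A] [Nonempty A]
    (I : A → A → ℝ) (hI : ∀ j i, 0 ≤ I j i)
    (β : A → A → ℝ → ℝ)
    (hβR : ∀ i j, 0 < I j i → InRegionR (β i j))
    (hβcont : ∀ i j, 0 < I j i → ContinuousOn (β i j) (Set.Icc (-1:ℝ) 1))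
    (B : ℕ → A → ℝ) (hB0 : ∀ k, B 0 k ∈ Set.Icc (0:ℝ) 1)
    (hupd : ∀ t i, B (t+1) i = B t i +
      ∑ j ∈ Finset.univ.filter (fun j => 0 < I j i),
        (I j i / ∑ k ∈ Finset.univ.filter (fun k => 0 < I k i), I k i) *
          β i j (B t j - B t i)) :
    (∃ v ∈ Set.Icc (0:ℝ) 1, ∀ i, Tendsto (fun t => B t i) atTop (nhds v)) ↔
    (∃ v ∈ Set.Icc (0:ℝ) 1, ∀ S : Set A,
      IsSourceComponent (fun a b => 0 < I a b) S →
      ∀ i ∈ S, Tendsto (fun t => B t i) atTop (nhds v)) := by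
  have h : IsBiasDynamics I β B := ⟨hI, hβR, hB0, hupd⟩
  refine ⟨fun ⟨v, hv, hall⟩ => ⟨v, hv, fun _ _ i _ => hall i⟩,
    fun ⟨v, hv, hsrc⟩ => ⟨v, hv, fun i => ?_⟩⟩
  have hmax := h.tendsto_maxOpinion hβcont hsrc
  have hmin := h.reflect.tendsto_maxOpinion
    (fun i j hji => continuousOn_neg_comp_neg_Icc (hβcont i j hji))
    (fun S hS k hk => (hsrc S hS k hk).const_sub 1)
  refine tendsto_of_tendsto_of_tendsto_of_le_of_le (by simpa using hmin.const_sub 1) hmax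
    (fun t => ?_) (le_maxOpinion B · i)
  linarith [le_maxOpinion (fun t k => 1 - B t k) t i]

theorem stmt_9 {A : Type*} [Fintype A] [Nonempty A] [DecidableEq A]
    (I : A → A → ℝ) (hI : ∀ j i, 0 ≤ I j i)
    (β : A → A → ℝ → ℝ)
    (hβR : ∀ i j, 0 < I j i → InRegionR (β i j))
    (hβcont : ∀ i j, 0 < I j i → ContinuousOn (β i j) (Set.Icc (-1:ℝ) 1))
    (B : ℕ → A → ℝ) (hB0 : ∀ k, B 0 k ∈ Set.Icc (0:ℝ) 1)
    (hupd : ∀ t i, B (t+1) i = B t i +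
      ∑ j ∈ Finset.univ.filter (fun j => 0 < I j i),
        (I j i / ∑ k ∈ Finset.univ.filter (fun k => 0 < I k i), I k i) *
          β i j (B t j - B t i)) :
    (∃ v ∈ Set.Icc (0:ℝ) 1, ∀ i, Tendsto (fun t => B t i) atTop (nhds v)) ↔
    (∃ v ∈ Set.Icc (0:ℝ) 1, ∀ S : Set A,
      IsSourceComponent (fun a b => 0 < I a b) S →
      ∀ i ∈ S, Tendsto (fun t => B t i) atTop (nhds v)) :=
  stmt_9_general I hI β hβR hβcont B hB0 hupd
end
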